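/- arXiv:1705.03189 — 10 statements merged into one kernel-verified Lean document; each statement's English description precedes it below -/
import Mathlib

section
/- Let F : C ⥤ A be a fully faithful functor between abelian categories admitting a left adjoint j* : A ⥤ C which is exact. Then the inclusion i : Ker j* ⥤ A of the full subcategory of objects sent to zero by j* admits a right adjoint i^! , given on an object A by the kernel of the unit morphism η_A : A ⟶ F(j* A). -/
open CategoryTheory Limits

/-!
A morphism `f : Y ⟶ X` out of an object with `j^* Y = 0` satisfies
`f ≫ η_X = η_Y ≫ F j^*(f) = 0`, because the right adjoint `F` preserves zero objects; hence `f`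
factors uniquely through `ker η_X`. This kernel lies in `Ker j^*`: as `F` is fully faithful the
counit is invertible, so `j^*(η_X)` is an isomorphism by a triangle identity, and the left exact
functor `j^*` sends `ker η_X` to `ker j^*(η_X) = 0`.
-/

noncomputable section KernelCoreflector

namespace CategoryTheory.NatTrans

variable {A : Type*} [Category A] [HasZeroMorphisms A] {T : A ⥤ A} (η : 𝟭 A ⟶ T)

lemma comp_app_eq_zero_of_app_eq_zero {Y X : A} (hY : η.app Y = 0) (f : Y ⟶ X) :
    f ≫ η.app X = 0 := by
  simpa [hY] using η.naturality f

variable [∀ X, HasKernel (η.app X)] (P : ObjectProperty A)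
  (hker : ∀ X, P (kernel (η.app X))) (hzero : ∀ Y, P Y → η.app Y = 0)

def kernelHomEquiv (Y : P.FullSubcategory) (X : A) :
    (P.ι.obj Y ⟶ X) ≃ (Y ⟶ ⟨kernel (η.app X), hker X⟩) where
  toFun f := ObjectProperty.homMk <|
    kernel.lift _ f (η.comp_app_eq_zero_of_app_eq_zero (hzero Y.obj Y.property) f)
  invFun g := g.hom ≫ kernel.ι _
  left_inv f := kernel.lift_ι _ _ _
  right_inv g := by ext; simp

lemma kernelHomEquiv_naturality (Y' Y : P.FullSubcategory) (X : A) (f : Y' ⟶ Y)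
    (g : P.ι.obj Y ⟶ X) :
    η.kernelHomEquiv P hker hzero Y' X (P.ι.map f ≫ g) =
      f ≫ η.kernelHomEquiv P hker hzero Y X g := by
  ext; simp [kernelHomEquiv]

def kernelCoreflector : A ⥤ P.FullSubcategory :=
  Adjunction.rightAdjointOfEquiv (η.kernelHomEquiv P hker hzero)
    (η.kernelHomEquiv_naturality P hker hzero)

def ιAdjKernelCoreflector : P.ι ⊣ η.kernelCoreflector P hker hzero :=
  Adjunction.adjunctionOfEquivRight _ _

lemma kernelCoreflector_obj_obj (X : A) :
    ((η.kernelCoreflector P hker hzero).obj X).obj = kernel (η.app X) := rfl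

end CategoryTheory.NatTrans

end KernelCoreflector

namespace CategoryTheory.Adjunction

variable {C A : Type*} [Category C] [Category A] {F : C ⥤ A} {L : A ⥤ C} (adj : L ⊣ F)

lemma isZero_map_kernel_unit_app [HasZeroMorphisms C] [HasZeroMorphisms A] [F.Full] [F.Faithful]
    (X : A) [HasKernel (adj.unit.app X)] [PreservesLimit (parallelPair (adj.unit.app X) 0) L] :
    IsZero (L.obj (kernel (adj.unit.app X))) :=
  have := adj.isLeftAdjoint
  (isZero_kernel_of_mono (L.map (adj.unit.app X))).of_iso (PreservesKernel.iso L _)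

lemma unit_app_eq_zero_of_isZero [HasZeroMorphisms C] [HasZeroMorphisms A] {Y : A}
    (hY : IsZero (L.obj Y)) : adj.unit.app Y = 0 :=
  have := adj.isRightAdjoint
  (F.map_isZero hY).eq_of_tgt _ _

end CategoryTheory.Adjunction

theorem stmt0_general {C A : Type*} [Category C] [Category A] [Abelian C] [Abelian A]
    (F : C ⥤ A) (hF : F.Full) (hF' : F.Faithful)
    (jStar : A ⥤ C) (adj : jStar ⊣ F)
    (h1 : PreservesFiniteLimits jStar) :
    ∃ (G : A ⥤ ObjectProperty.FullSubcategory (fun X : A => IsZero (jStar.obj X)))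
      (_ : ObjectProperty.ι (fun X : A => IsZero (jStar.obj X)) ⊣ G),
      ∀ X : A, Nonempty ((G.obj X).obj ≅ kernel (adj.unit.app X)) := by
  have hker (X : A) : IsZero (jStar.obj (kernel (adj.unit.app X))) :=
    adj.isZero_map_kernel_unit_app X
  have hzero (Y : A) (hY : IsZero (jStar.obj Y)) : adj.unit.app Y = 0 :=
    adj.unit_app_eq_zero_of_isZero hY
  exact ⟨_, adj.unit.ιAdjKernelCoreflector _ hker hzero,
    fun X => ⟨eqToIso (adj.unit.kernelCoreflector_obj_obj _ hker hzero X)⟩⟩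

/-- If `F : C ⥤ A` is a fully faithful functor between abelian categories
with an exact left adjoint `jStar : A ⥤ C`, then the inclusion of the full subcategory
`Ker jStar` of objects sent to zero admits a right adjoint, given on objects by the
kernel of the unit morphism `η_X : X ⟶ F(jStar X)`. -/
theorem stmt0 {C A : Type*} [Category C] [Category A] [Abelian C] [Abelian A]
    (F : C ⥤ A) (hF : F.Full) (hF' : F.Faithful)
    (jStar : A ⥤ C) (adj : jStar ⊣ F)
    (h1 : PreservesFiniteLimits jStar) (h2 : PreservesFiniteColimits jStar) :
    ∃ (G : A ⥤ ObjectProperty.FullSubcategory (fun X : A => IsZero (jStar.obj X)))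
      (_ : ObjectProperty.ι (fun X : A => IsZero (jStar.obj X)) ⊣ G),
      ∀ X : A, Nonempty ((G.obj X).obj ≅ kernel (adj.unit.app X)) :=
  stmt0_general F hF hF' jStar adj h1
end

section
/- Given a right recollement (B, A, C, i_*, i^!, j^*, j_*) of abelian categories, for every object A of A there is an exact sequence 0 ⟶ i_* i^! A ⟶ A ⟶ j_* j^* A ⟶ i_* B ⟶ 0 for some object B of B, where the first map is the counit of (i_*, i^!) and the second the unit of (j^*, j_*). -/
/-!
Since `j_*` is fully faithful, `j^*` inverts the unit `η_X`; as `j^*` is exact, it kills the kernel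
and the cokernel of `η_X`, which therefore lie in the essential image of `i_*`. Every map from that
essential image to `X` factors uniquely through the counit `ε_X` of `(i_*, i^!)`: uniqueness gives
that `ε_X` is mono, existence gives exactness at `X`, and the cokernel of `η_X` is the `i_* Y`.
Finally `ε_X ≫ η_X = 0` by naturality of `η`, because `j^* i_* = 0`.
-/

open CategoryTheory Limits

/-- A right recollement `(B, A, C, i_*, i^!, j^*, j_*)` of abelian categories:
`i_*` and `j^*` are exact, `i_*` and `j_*` are fully faithful, `(i_*, i^!)` and
`(j^*, j_*)` are adjoint pairs, and the essential image of `i_*` is the kernel of `j^*`. -/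
structure RightRecollement (B A C : Type*) [Category B] [Category A] [Category C]
    [Abelian B] [Abelian A] [Abelian C] where
  iStar : B ⥤ A
  iShriek : A ⥤ B
  jStar : A ⥤ C
  jLower : C ⥤ A
  iStar_preservesFiniteLimits : PreservesFiniteLimits iStar
  iStar_preservesFiniteColimits : PreservesFiniteColimits iStar
  jStar_preservesFiniteLimits : PreservesFiniteLimits jStar
  jStar_preservesFiniteColimits : PreservesFiniteColimits jStar
  iStar_full : iStar.Full
  iStar_faithful : iStar.Faithful
  jLower_full : jLower.Full
  jLower_faithful : jLower.Faithful
  adj_i : iStar ⊣ iShriek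
  adj_j : jStar ⊣ jLower
  im_eq_ker : ∀ X : A, (∃ Y : B, Nonempty (iStar.obj Y ≅ X)) ↔ IsZero (jStar.obj X)

namespace CategoryTheory.Adjunction

variable {C D : Type*} [Category C] [Category D] {L : C ⥤ D} {G : D ⥤ C} (adj : L ⊣ G)
  [L.Full] [L.Faithful] {W : D}

lemma exists_comp_counit_eq_of_mem_essImage (hW : L.essImage W) {X : D} (f : W ⟶ X) :
    ∃ u : W ⟶ L.obj (G.obj X), u ≫ adj.counit.app X = f := by
  have := adj.isIso_counit_app_iff_mem_essImage.2 hW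
  exact ⟨inv (adj.counit.app W) ≫ L.map (G.map f), by simp⟩

lemma comp_counit_injective_of_mem_essImage (hW : L.essImage W) (X : D) :
    Function.Injective fun u : W ⟶ L.obj (G.obj X) => u ≫ adj.counit.app X := by
  have := adj.isIso_counit_app_iff_mem_essImage.2 hW
  intro u v huv
  have hG : G.map u = G.map v := by
    simpa [← cancel_mono (G.map (adj.counit.app X))] using congr_arg G.map huv
  rw [← cancel_epi (adj.counit.app W), ← adj.counit_naturality u, ← adj.counit_naturality v, hG]

end CategoryTheory.Adjunction

section

variable {A C : Type*} [Category A] [Category C] [Abelian A] [Abelian C] (F : A ⥤ C)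
  {X Y : A} (f : X ⟶ Y)

lemma CategoryTheory.Functor.isZero_obj_kernel_of_isIso_map [PreservesFiniteLimits F]
    [IsIso (F.map f)] : IsZero (F.obj (Limits.kernel f)) :=
  (isZero_kernel_of_mono (F.map f)).of_iso (PreservesKernel.iso F f)

lemma CategoryTheory.Functor.isZero_obj_cokernel_of_isIso_map [PreservesFiniteColimits F]
    [IsIso (F.map f)] : IsZero (F.obj (cokernel f)) :=
  (isZero_cokernel_of_epi (F.map f)).of_iso (PreservesCokernel.iso F f)

lemma CategoryTheory.ShortComplex.exact_cokernel_π_comp_iso {Z : A} (e : cokernel f ≅ Z) :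
    (ShortComplex.mk f (cokernel.π f ≫ e.hom) (by simp)).Exact := by
  refine (ShortComplex.exact_iff_of_iso ?_).1 (ShortComplex.cokernelSequence_exact f)
  exact ShortComplex.isoMk (Iso.refl _) (Iso.refl _) e
    (by simp [ShortComplex.cokernelSequence]) (by simp [ShortComplex.cokernelSequence])

end

namespace RightRecollement

variable {B A C : Type*} [Category B] [Category A] [Category C] [Abelian B] [Abelian A]
  [Abelian C] (R : RightRecollement B A C)

attribute [local instance] iStar_full iStar_faithful jLower_full jLower_faithful
  jStar_preservesFiniteLimits jStar_preservesFiniteColimits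

lemma isZero_jStar_obj_iStar_obj (Y : B) : IsZero (R.jStar.obj (R.iStar.obj Y)) :=
  (R.im_eq_ker _).1 ⟨Y, ⟨Iso.refl _⟩⟩

lemma counit_comp_unit (X : A) : R.adj_i.counit.app X ≫ R.adj_j.unit.app X = 0 := by
  have := R.adj_j.unit_naturality (R.adj_i.counit.app X)
  simp only [Functor.id_obj] at this
  rw [← this, (R.isZero_jStar_obj_iStar_obj _).eq_of_src (R.jStar.map _) 0,
    Functor.map_zero, comp_zero]

lemma mono_counit (X : A) : Mono (R.adj_i.counit.app X) := by
  have hK : R.iStar.essImage (kernel (R.adj_i.counit.app X)) :=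
    (R.im_eq_ker _).2 (IsZero.of_mono (R.jStar.map (kernel.ι _)) (R.isZero_jStar_obj_iStar_obj _))
  refine Abelian.mono_of_kernel_ι_eq_zero _ (R.adj_i.comp_counit_injective_of_mem_essImage hK X ?_)
  simp

lemma exact_counit_unit (X : A) : (ShortComplex.mk _ _ (R.counit_comp_unit X)).Exact := by
  obtain ⟨u, hu⟩ := R.adj_i.exists_comp_counit_eq_of_mem_essImage
    ((R.im_eq_ker _).2 (R.jStar.isZero_obj_kernel_of_isIso_map (R.adj_j.unit.app X)))
    (kernel.ι (R.adj_j.unit.app X))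
  rw [ShortComplex.exact_iff_kernel_ι_comp_cokernel_π_zero]
  simp only [Functor.id_obj] at hu
  dsimp
  rw [← hu, Category.assoc, cokernel.condition, comp_zero]

lemma cokernel_unit_mem_essImage (X : A) : R.iStar.essImage (cokernel (R.adj_j.unit.app X)) :=
  (R.im_eq_ker _).2 (R.jStar.isZero_obj_cokernel_of_isIso_map _)

end RightRecollement

/-- for every object `X` there is an exact sequence
`0 ⟶ i_* i^! X ⟶ X ⟶ j_* j^* X ⟶ i_* Y ⟶ 0` for some `Y : B`,
where the first map is the counit of `(i_*, i^!)` and the second the unit of `(j^*, j_*)`. -/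
theorem stmt1 {B A C : Type*} [Category B] [Category A] [Category C]
    [Abelian B] [Abelian A] [Abelian C] (R : RightRecollement B A C) (X : A) :
    ∃ (Y : B) (g : R.jLower.obj (R.jStar.obj X) ⟶ R.iStar.obj Y)
      (w₁ : R.adj_i.counit.app X ≫ R.adj_j.unit.app X = 0)
      (w₂ : R.adj_j.unit.app X ≫ g = 0),
      Mono (R.adj_i.counit.app X) ∧ Epi g ∧
      (ShortComplex.mk (R.adj_i.counit.app X) (R.adj_j.unit.app X) w₁).Exact ∧
      (ShortComplex.mk (R.adj_j.unit.app X) g w₂).Exact := by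
  obtain ⟨Y, ⟨e⟩⟩ := R.cokernel_unit_mem_essImage X
  exact ⟨Y, cokernel.π _ ≫ e.inv, R.counit_comp_unit X, by simp, R.mono_counit X,
    epi_comp _ _, R.exact_counit_unit X, ShortComplex.exact_cokernel_π_comp_iso _ e.symm⟩
end

section
/- Given a right recollement (B, A, C, i_*, i^!, j^*, j_*) of abelian categories, for every object A of A and every object B of B, Ext^1(i_* B, j_* j^* A) = 0 and Hom(i_* B, j_* j^* A) = 0; that is, every short exact sequence 0 ⟶ j_* j^* A ⟶ X ⟶ i_* B ⟶ 0 splits. -/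
/-!
Since `j^*` kills `i_* Y`, the adjunction `j^* ⊣ j_*` identifies maps `i_* Y ⟶ j_* W` with maps
`j^* i_* Y ⟶ W`, which vanish. Given a short exact sequence `0 ⟶ j_* j^* X ⟶ E ⟶ i_* Y ⟶ 0`,
exactness of `j^*` makes `j^* f` an isomorphism, and `E ⟶ j_* j^* E ≅ j_* j^* j_* j^* X ⟶ j_* j^* X`
(unit, inverse of `j_* j^* f`, counit) retracts `f` by the triangle identity.
-/

open CategoryTheory Limits

namespace CategoryTheory.Adjunction

variable {C D : Type*} [Category C] [Category D] {F : C ⥤ D} {G : D ⥤ C}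

lemma eq_zero_of_isZero_obj [HasZeroMorphisms C] [HasZeroMorphisms D] (adj : F ⊣ G)
    {Z : C} {W : D} (hZ : IsZero (F.obj Z)) (φ : Z ⟶ G.obj W) : φ = 0 := by
  have := adj.isRightAdjoint
  calc φ = adj.homEquiv Z W ((adj.homEquiv Z W).symm φ) :=
        ((adj.homEquiv Z W).apply_symm_apply φ).symm
    _ = adj.homEquiv Z W 0 := by rw [hZ.eq_of_src ((adj.homEquiv Z W).symm φ) 0]
    _ = 0 := by rw [homEquiv_unit, G.map_zero, comp_zero]

lemma isSplitMono_of_isIso_map (adj : F ⊣ G) {W : D} {E : C} (f : G.obj W ⟶ E)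
    [IsIso (F.map f)] : IsSplitMono f :=
  IsSplitMono.mk' ⟨adj.unit.app E ≫ G.map (inv (F.map f) ≫ adj.counit.app W), by
    rw [← unit_naturality_assoc, ← G.map_comp, IsIso.hom_inv_id_assoc,
      right_triangle_components]⟩

end CategoryTheory.Adjunction

lemma RightRecollement.isZero_jStar_obj_iStar_obj_s2 {B A C : Type*} [Category B] [Category A]
    [Category C] [Abelian B] [Abelian A] [Abelian C] (R : RightRecollement B A C) (Y : B) :
    IsZero (R.jStar.obj (R.iStar.obj Y)) :=
  (R.im_eq_ker _).mp ⟨Y, ⟨Iso.refl _⟩⟩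

theorem stmt2 {B A C : Type*} [Category B] [Category A] [Category C]
    [Abelian B] [Abelian A] [Abelian C] (R : RightRecollement B A C) (X : A) (Y : B) :
    (∀ φ : R.iStar.obj Y ⟶ R.jLower.obj (R.jStar.obj X), φ = 0) ∧
    (∀ (E : A) (f : R.jLower.obj (R.jStar.obj X) ⟶ E) (g : E ⟶ R.iStar.obj Y)
      (w : f ≫ g = 0), (ShortComplex.mk f g w).ShortExact →
        ∃ r : E ⟶ R.jLower.obj (R.jStar.obj X), f ≫ r = 𝟙 _) := by
  have hZ := R.isZero_jStar_obj_iStar_obj_s2 Y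
  refine ⟨R.adj_j.eq_zero_of_isZero_obj hZ, fun E f g w hS => ?_⟩
  have := R.jStar_preservesFiniteLimits
  have := R.jStar_preservesFiniteColimits
  have : IsIso (R.jStar.map f) := (hS.map_of_exact R.jStar).isIso_f_iff.mpr hZ
  have := R.adj_j.isSplitMono_of_isIso_map f
  exact ⟨retraction f, IsSplitMono.id f⟩
end

section
/- Given a right recollement (B, A, C, i_*, i^!, j^*, j_*) of abelian categories in which i^! is exact, the functor j_* is also exact. -/
/-!
`j_*` is a right adjoint, so it is left exact and it suffices that it preserves
epimorphisms. For an epimorphism `f` in `C`, let `Q` be the cokernel of `j_* f`. Since `j^*` is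
exact and `j^* j_* ≅ 𝟭`, `j^* Q = 0`, so `Q ≅ i_* W`. Adjunction shows `i^! j_* = 0`, so exactness
of `i^!` applied to the epimorphism `j_* Y ↠ Q` gives `W ≅ i^! i_* W ≅ i^! Q = 0`.
-/

open CategoryTheory Limits

theorem CategoryTheory.Functor.preservesFiniteColimits_of_isRightAdjoint_of_preservesEpimorphisms
    {C D : Type*} [Category C] [Category D] [Abelian C] [Abelian D] (G : C ⥤ D)
    [G.IsRightAdjoint] [G.PreservesEpimorphisms] : PreservesFiniteColimits G :=
  have : G.Additive := Functor.additive_of_preserves_binary_products G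
  have : G.PreservesHomology := G.preservesHomology_of_preservesEpis_and_kernels
  G.preservesFiniteColimits_of_preservesHomology

namespace RightRecollement

attribute [local instance] iStar_full iStar_faithful jLower_full jLower_faithful
  jStar_preservesFiniteColimits

variable {B A C : Type*} [Category B] [Category A] [Category C]
  [Abelian B] [Abelian A] [Abelian C] (R : RightRecollement B A C)

theorem isZero_iShriek_obj_jLower_obj (Z : C) : IsZero (R.iShriek.obj (R.jLower.obj Z)) := by
  rw [IsZero.iff_id_eq_zero]
  apply (R.adj_i.homEquiv _ _).symm.injective
  have hzero : IsZero (R.jStar.obj (R.iStar.obj (R.iShriek.obj (R.jLower.obj Z)))) :=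
    (R.im_eq_ker _).1 ⟨_, ⟨Iso.refl _⟩⟩
  exact (R.adj_j.homEquiv _ _).symm.injective (hzero.eq_of_src _ _)

theorem isZero_of_isZero_jStar_obj_of_isZero_iShriek_obj {X : A}
    (hj : IsZero (R.jStar.obj X)) (hi : IsZero (R.iShriek.obj X)) : IsZero X := by
  obtain ⟨W, ⟨e⟩⟩ := (R.im_eq_ker X).2 hj
  have hW : IsZero W := (hi.of_iso (R.iShriek.mapIso e)).of_iso (asIso (R.adj_i.unit.app W))
  exact (R.iStar.map_isZero hW).of_iso e.symm

theorem jLower_preservesEpimorphisms [R.iShriek.PreservesEpimorphisms] :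
    R.jLower.PreservesEpimorphisms where
  preserves {Y Z} f _ := by
    have : (R.jLower ⋙ R.jStar).PreservesEpimorphisms := .of_iso (asIso R.adj_j.counit).symm
    have : Epi (R.jStar.map (R.jLower.map f)) := (R.jLower ⋙ R.jStar).map_epi f
    have hj : IsZero (R.jStar.obj (cokernel (R.jLower.map f))) :=
      (isZero_cokernel_of_epi (R.jStar.map (R.jLower.map f))).of_iso
        (PreservesCokernel.iso R.jStar _)
    have hi : IsZero (R.iShriek.obj (cokernel (R.jLower.map f))) :=
      (R.isZero_iShriek_obj_jLower_obj Z).of_epi (R.iShriek.map (cokernel.π _))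
    exact Abelian.epi_of_cokernel_π_eq_zero _
      ((R.isZero_of_isZero_jStar_obj_of_isZero_iShriek_obj hj hi).eq_of_tgt _ _)

end RightRecollement

theorem stmt5_general {B A C : Type*} [Category B] [Category A] [Category C]
    [Abelian B] [Abelian A] [Abelian C] (R : RightRecollement B A C)
    (h₂ : PreservesFiniteColimits R.iShriek) :
    Nonempty (PreservesFiniteLimits R.jLower) ∧
    Nonempty (PreservesFiniteColimits R.jLower) :=
  have : R.jLower.IsRightAdjoint := R.adj_j.isRightAdjoint
  have := R.jLower_preservesEpimorphisms
  ⟨⟨inferInstance⟩, ⟨R.jLower.preservesFiniteColimits_of_isRightAdjoint_of_preservesEpimorphisms⟩⟩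

/-- if `i^!` is exact then `j_*` is exact. -/
theorem stmt5 {B A C : Type*} [Category B] [Category A] [Category C]
    [Abelian B] [Abelian A] [Abelian C] (R : RightRecollement B A C)
    (h₁ : PreservesFiniteLimits R.iShriek) (h₂ : PreservesFiniteColimits R.iShriek) :
    Nonempty (PreservesFiniteLimits R.jLower) ∧
    Nonempty (PreservesFiniteColimits R.jLower) :=
  stmt5_general R h₂
end

section
/- Let (U, V) and (V, W) be torsion pairs in an abelian category A, with U closed under subobjects and W closed under quotient objects. Then U = W. -/
open CategoryTheory Limits

variable {A : Type*} [Category A] [Abelian A]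

/-- A torsion pair `(T, F)` in an abelian category: homs from `T`-objects to
`F`-objects vanish, and every object `X` admits a short exact sequence
`0 ⟶ T ⟶ X ⟶ F ⟶ 0` with `T ∈ T` and `F ∈ F` (encoded as: a mono `f : T ⟶ X`
with `T ∈ T` and `cokernel f ∈ F`). -/
structure TorsionPair (T F : A → Prop) : Prop where
  hom_zero : ∀ (X Y : A), T X → F Y → ∀ f : X ⟶ Y, f = 0
  decomp : ∀ X : A, ∃ (T₀ : A) (f : T₀ ⟶ X), Mono f ∧ T T₀ ∧ F (cokernel f)

/-- Closed under subobjects. -/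
def ClosedUnderSubobjects (P : A → Prop) : Prop :=
  ∀ (X Y : A) (f : X ⟶ Y), Mono f → P Y → P X

/-- Closed under quotient objects. -/
def ClosedUnderQuotients (P : A → Prop) : Prop :=
  ∀ (X Y : A) (f : X ⟶ Y), Epi f → P X → P Y

/-!
An object lying in both classes of a torsion pair is zero, since its identity is a morphism from
the torsion class to the free class. Given `X ∈ U`, its `V`-torsion part is a subobject of `X`,
hence lies in `U ∩ V` and vanishes, so `X` is its own `W`-quotient. Dually, given `X ∈ W`, its
`V`-quotient is a quotient of `X`, hence lies in `V ∩ W` and vanishes, so `X` is its own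
`U`-torsion part.
-/

namespace TorsionPair

variable {T F : A → Prop}

lemma isZero_of_torsion_of_free (h : TorsionPair T F) {X : A} (hT : T X) (hF : F X) :
    IsZero X :=
  (IsZero.iff_id_eq_zero X).2 (h.hom_zero X X hT hF _)

lemma free_of_forall_torsion_subobject_isZero (h : TorsionPair T F)
    (hF : ClosedUnderQuotients F) {X : A}
    (hX : ∀ (Y : A) (f : Y ⟶ X), Mono f → T Y → IsZero Y) : F X := by
  obtain ⟨T₀, f, hf, hT₀, hcoker⟩ := h.decomp X
  have hf_zero : f = 0 := (hX T₀ f hf hT₀).eq_of_src f 0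
  subst hf_zero
  exact hF _ X cokernelZeroIsoTarget.hom inferInstance hcoker

lemma torsion_of_forall_free_quotient_isZero (h : TorsionPair T F)
    (hT : ClosedUnderSubobjects T) {X : A}
    (hX : ∀ (Y : A) (g : X ⟶ Y), Epi g → F Y → IsZero Y) : T X := by
  obtain ⟨T₀, f, hf, hT₀, hcoker⟩ := h.decomp X
  have : Epi f := Abelian.epi_of_cokernel_π_eq_zero f
    ((hX _ (cokernel.π f) inferInstance hcoker).eq_of_tgt _ 0)
  have : IsIso f := isIso_of_mono_of_epi f
  exact hT X T₀ (inv f) inferInstance hT₀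

end TorsionPair

/-- if `(U, V)` and `(V, W)` are torsion pairs with `U` closed under
subobjects and `W` closed under quotient objects, then `U = W`. -/
theorem stmt8 (U V W : A → Prop) (h₁ : TorsionPair U V) (h₂ : TorsionPair V W)
    (hU : ClosedUnderSubobjects U) (hW : ClosedUnderQuotients W) :
    ∀ X : A, U X ↔ W X := by
  intro X
  constructor
  · intro hX
    exact h₂.free_of_forall_torsion_subobject_isZero hW fun Y f hf hV =>
      h₁.isZero_of_torsion_of_free (hU Y X f hf hX) hV
  · intro hX
    exact h₁.torsion_of_forall_free_quotient_isZero hU fun Y g hg hV =>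
      h₂.isZero_of_torsion_of_free hV (hW X Y g hg hX)
end

section
/- Let (U, V) and (V, W) be torsion pairs in an abelian category A, with U closed under subobjects and W closed under quotient objects. Then every object A of A is isomorphic to the direct sum A_U ⊕ A^V, where 0 ⟶ A_U ⟶ A ⟶ A^V ⟶ 0 is the torsion decomposition of A with respect to (U, V). -/
/-! Take the `(V, W)`-decomposition `0 ⟶ V₀ ⟶ X ⟶ X/V₀ ⟶ 0` of `X`. The composite
`T₀ ⟶ X ⟶ X/V₀` is mono, because its kernel lies in `U` (a subobject of `T₀`) and maps to
`V₀ ∈ V` through `X`; it is epi, because its cokernel lies in `W` (a quotient of `X/V₀`) and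
receives a map from `cokernel f ∈ V` through which `X ⟶ X/V₀ ⟶ coker` factors. Hence it is an
isomorphism, so `f` has a retraction and the torsion sequence of `X` splits. -/

open CategoryTheory Limits

variable {A : Type*} [Category A] [Abelian A]

namespace TorsionPair

variable {U V W : A → Prop}

theorem mono_comp_cokernel_π (h : TorsionPair U V) (hU : ClosedUnderSubobjects U)
    {T₀ X V₀ : A} (f : T₀ ⟶ X) [Mono f] (hT : U T₀) (g : V₀ ⟶ X) [Mono g] (hV : V V₀) :
    Mono (f ≫ cokernel.π g) := by
  apply Abelian.mono_of_kernel_ι_eq_zero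
  have hlift : (kernel.ι (f ≫ cokernel.π g) ≫ f) ≫ cokernel.π g = 0 := by
    rw [Category.assoc, kernel.condition]
  have hker : U (kernel (f ≫ cokernel.π g)) := hU _ _ (kernel.ι _) inferInstance hT
  have hfac := Abelian.monoLift_comp g _ hlift
  rw [h.hom_zero _ _ hker hV (Abelian.monoLift g _ hlift), zero_comp] at hfac
  rw [← cancel_mono f, zero_comp, hfac]

theorem epi_comp_cokernel_π (h : TorsionPair V W) (hW : ClosedUnderQuotients W)
    {T₀ X V₀ : A} (f : T₀ ⟶ X) (hF : V (cokernel f)) (g : V₀ ⟶ X) (hW₀ : W (cokernel g)) :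
    Epi (f ≫ cokernel.π g) := by
  apply Abelian.epi_of_cokernel_π_eq_zero
  have hdesc : f ≫ cokernel.π g ≫ cokernel.π (f ≫ cokernel.π g) = 0 := by
    rw [← Category.assoc, cokernel.condition]
  have hcok : W (cokernel (f ≫ cokernel.π g)) := hW _ _ (cokernel.π _) inferInstance hW₀
  have hfac := cokernel.π_desc f _ hdesc
  rw [h.hom_zero _ _ hF hcok (cokernel.desc f _ hdesc), comp_zero] at hfac
  rw [← cancel_epi (cokernel.π g), comp_zero, hfac]

end TorsionPair

noncomputable def isoBiprodCokernelOfRetraction {T X : A}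
    (f : T ⟶ X) (r : X ⟶ T) (hr : f ≫ r = 𝟙 T) : X ≅ T ⊞ cokernel f :=
  (ShortComplex.Splitting.ofExactOfRetraction _ (ShortComplex.exact_cokernel f) r hr
    inferInstance).isoBinaryBiproduct

/-- under the hypotheses of Statement 8, every object `X` is isomorphic
to `T₀ ⊞ cokernel f` for any torsion decomposition `0 ⟶ T₀ ⟶ X ⟶ cokernel f ⟶ 0`
of `X` with respect to `(U, V)`. -/
theorem stmt9 (U V W : A → Prop) (h₁ : TorsionPair U V) (h₂ : TorsionPair V W)
    (hU : ClosedUnderSubobjects U) (hW : ClosedUnderQuotients W)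
    (X T₀ : A) (f : T₀ ⟶ X) (hf : Mono f) (hT : U T₀) (hF : V (cokernel f)) :
    Nonempty (X ≅ T₀ ⊞ cokernel f) := by
  obtain ⟨V₀, g, hg, hV₀, hW₀⟩ := h₂.decomp X
  have := h₁.mono_comp_cokernel_π hU f hT g hV₀
  have := h₂.epi_comp_cokernel_π hW f hF g hW₀
  have := isIso_of_mono_of_epi (f ≫ cokernel.π g)
  exact ⟨isoBiprodCokernelOfRetraction f (cokernel.π g ≫ inv (f ≫ cokernel.π g))
    (by rw [← Category.assoc, IsIso.hom_inv_id])⟩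
end

section
/- Given a recollement (B, A, C, i^*, i_*, i^!, j_!, j^*, j_*) of abelian categories in which both i^* and i^! are exact, the functors i^* and i^! are naturally isomorphic, j_! and j_* are naturally isomorphic, and A is equivalent to the product category B × C. -/
open CategoryTheory Limits

/-- A recollement `(B, A, C, i^*, i_*, i^!, j_!, j^*, j_*)` of abelian categories:
`(i^*, i_*)`, `(i_*, i^!)`, `(j_!, j^*)`, `(j^*, j_*)` are adjoint pairs,
`i_*`, `j_!`, `j_*` are fully faithful, and the essential image of `i_*` is the
full subcategory of objects `X` with `j^* X ≅ 0`. -/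
structure Recollement (B A C : Type*) [Category B] [Category A] [Category C]
    [Abelian B] [Abelian A] [Abelian C] where
  iUpper : A ⥤ B      -- i^*
  iStar : B ⥤ A       -- i_*
  iShriek : A ⥤ B     -- i^!
  jShriek : C ⥤ A     -- j_!
  jStar : A ⥤ C       -- j^*
  jLower : C ⥤ A      -- j_*
  adj_i₁ : iUpper ⊣ iStar
  adj_i₂ : iStar ⊣ iShriek
  adj_j₁ : jShriek ⊣ jStar
  adj_j₂ : jStar ⊣ jLower
  iStar_full : iStar.Full
  iStar_faithful : iStar.Faithful
  jShriek_full : jShriek.Full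
  jShriek_faithful : jShriek.Faithful
  jLower_full : jLower.Full
  jLower_faithful : jLower.Faithful
  im_eq_ker : ∀ X : A, (∃ Y : B, Nonempty (iStar.obj Y ≅ X)) ↔ IsZero (jStar.obj X)

/-!
The counits of `i_* ⊣ i^!` and `j_! ⊣ j^*` assemble into a map
`φ_X : i_* i^! X ⊞ j_! j^* X ⟶ X`. We have `j^* i_* = 0` and `i^* j_! = 0`; left exactness of
`i^*` turns the monomorphism `i_* i^! j_! Z ⟶ j_! Z` into a monomorphism
`i^! j_! Z ⟶ i^* j_! Z = 0`, so `i^! j_! = 0` as well. Hence `j^* φ_X` and `i^! φ_X` are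
isomorphisms, and since the exact functors `j^*` and `i^!` jointly detect zero objects, `φ_X` is an
isomorphism. Every object thus splits canonically as `i_* Y ⊞ j_! Z`, which makes
`(i^!, j^*) : A ⥤ B × C` an equivalence, `i^! ≅ i^* i_* i^! ⟶ i^*` an isomorphism
(as `i^* j_! = 0`) and `j_! ≅ j_! j^* j_* ⟶ j_*` an isomorphism (as `i^! j_* = 0`).
-/

namespace CategoryTheory.Functor

variable {D E : Type*} [Category D] [Category E] [Preadditive D] [Preadditive E]
  (F : E ⥤ D) [F.Additive] (X Y : E) [HasBinaryBiproduct X Y]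

lemma isIso_map_biprod_inl_of_isZero (hY : IsZero (F.obj Y)) :
    IsIso (F.map (biprod.inl : X ⟶ X ⊞ Y)) := by
  have := preservesBinaryBiproducts_of_preservesBiproducts F
  have h : F.map biprod.inl = biprod.inl ≫ (F.mapBiprod X Y).inv :=
    (biprod.inl_desc _ _).symm
  rw [h, ← isoBiprodZero_hom hY]
  infer_instance

lemma isIso_map_biprod_inr_of_isZero (hX : IsZero (F.obj X)) :
    IsIso (F.map (biprod.inr : Y ⟶ X ⊞ Y)) := by
  have := preservesBinaryBiproducts_of_preservesBiproducts F
  have h : F.map biprod.inr = biprod.inr ≫ (F.mapBiprod X Y).inv :=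
    (biprod.inr_desc _ _).symm
  rw [h, ← isoZeroBiprod_hom hX]
  infer_instance

end CategoryTheory.Functor

namespace Recollement

variable {B A C : Type*} [Category B] [Category A] [Category C]
  [Abelian B] [Abelian A] [Abelian C] (R : Recollement B A C)

instance : R.iStar.Full := R.iStar_full
instance : R.iStar.Faithful := R.iStar_faithful
instance : R.jShriek.Full := R.jShriek_full
instance : R.jShriek.Faithful := R.jShriek_faithful
instance : R.jLower.Full := R.jLower_full
instance : R.jLower.Faithful := R.jLower_faithful

instance : R.iStar.IsRightAdjoint := R.adj_i₁.isRightAdjoint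
instance : R.iShriek.IsRightAdjoint := R.adj_i₂.isRightAdjoint
instance : R.jStar.IsRightAdjoint := R.adj_j₁.isRightAdjoint
instance : R.jStar.IsLeftAdjoint := R.adj_j₂.isLeftAdjoint

instance : R.iShriek.Additive := Functor.additive_of_preserves_binary_products _
instance : R.jStar.Additive := Functor.additive_of_preserves_binary_products _
instance : R.iStar.Additive := Functor.additive_of_preserves_binary_products _
instance : R.iUpper.Additive := R.adj_i₁.left_adjoint_additive

lemma isZero_jStar_obj_iStar_obj (Y : B) : IsZero (R.jStar.obj (R.iStar.obj Y)) :=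
  (R.im_eq_ker _).mp ⟨Y, ⟨Iso.refl _⟩⟩

lemma isZero_iUpper_obj_jShriek_obj (Z : C) : IsZero (R.iUpper.obj (R.jShriek.obj Z)) := by
  rw [IsZero.iff_id_eq_zero]
  apply (R.adj_i₁.homEquiv _ _).injective
  apply (R.adj_j₁.homEquiv _ _).injective
  exact (R.isZero_jStar_obj_iStar_obj _).eq_of_tgt _ _

lemma isZero_iShriek_obj_jLower_obj (Z : C) : IsZero (R.iShriek.obj (R.jLower.obj Z)) := by
  rw [IsZero.iff_id_eq_zero]
  apply (R.adj_i₂.homEquiv _ _).symm.injective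
  apply (R.adj_j₂.homEquiv _ _).symm.injective
  exact (R.isZero_jStar_obj_iStar_obj _).eq_of_src _ _

lemma isZero_of_isZero_jStar_obj_of_isZero_iShriek_obj {X : A}
    (hj : IsZero (R.jStar.obj X)) (hi : IsZero (R.iShriek.obj X)) : IsZero X := by
  obtain ⟨Y, ⟨e⟩⟩ := (R.im_eq_ker X).mpr hj
  have hY : IsZero Y :=
    (hi.of_iso (R.iShriek.mapIso e)).of_iso (asIso (R.adj_i₂.unit.app Y))
  exact (R.iStar.map_isZero hY).of_iso e.symm

lemma mono_of_mono_jStar_map_of_mono_iShriek_map {X Y : A} (f : X ⟶ Y)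
    [Mono (R.jStar.map f)] [Mono (R.iShriek.map f)] : Mono f :=
  Abelian.mono_of_kernel_ι_eq_zero _ <| IsZero.eq_of_src
    (R.isZero_of_isZero_jStar_obj_of_isZero_iShriek_obj
      ((isZero_kernel_of_mono _).of_iso (PreservesKernel.iso _ f))
      ((isZero_kernel_of_mono _).of_iso (PreservesKernel.iso _ f))) _ _

lemma epi_of_epi_jStar_map_of_epi_iShriek_map [PreservesFiniteColimits R.iShriek]
    {X Y : A} (f : X ⟶ Y) [Epi (R.jStar.map f)] [Epi (R.iShriek.map f)] : Epi f :=
  Abelian.epi_of_cokernel_π_eq_zero _ <| IsZero.eq_of_tgt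
    (R.isZero_of_isZero_jStar_obj_of_isZero_iShriek_obj
      ((isZero_cokernel_of_epi _).of_iso (PreservesCokernel.iso _ f))
      ((isZero_cokernel_of_epi _).of_iso (PreservesCokernel.iso _ f))) _ _

lemma isIso_of_isIso_jStar_map_of_isIso_iShriek_map [PreservesFiniteColimits R.iShriek]
    {X Y : A} (f : X ⟶ Y) [IsIso (R.jStar.map f)] [IsIso (R.iShriek.map f)] : IsIso f :=
  have := R.mono_of_mono_jStar_map_of_mono_iShriek_map f
  have := R.epi_of_epi_jStar_map_of_epi_iShriek_map f
  isIso_of_mono_of_epi f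

instance mono_adj_i₂_counit_app (X : A) : Mono (R.adj_i₂.counit.app X) :=
  have : Mono (R.jStar.map (R.adj_i₂.counit.app X)) :=
    (R.isZero_jStar_obj_iStar_obj _).mono _
  R.mono_of_mono_jStar_map_of_mono_iShriek_map _

lemma isZero_iShriek_obj_jShriek_obj [PreservesFiniteLimits R.iUpper] (Z : C) :
    IsZero (R.iShriek.obj (R.jShriek.obj Z)) :=
  ((R.isZero_iUpper_obj_jShriek_obj Z).of_mono (R.iUpper.map (R.adj_i₂.counit.app _))).of_iso
    (asIso (R.adj_i₁.counit.app _)).symm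

noncomputable def biprodCounit (X : A) :
    R.iStar.obj (R.iShriek.obj X) ⊞ R.jShriek.obj (R.jStar.obj X) ⟶ X :=
  biprod.desc (R.adj_i₂.counit.app X) (R.adj_j₁.counit.app X)

@[simp]
lemma inl_biprodCounit (X : A) : biprod.inl ≫ R.biprodCounit X = R.adj_i₂.counit.app X :=
  biprod.inl_desc _ _

@[simp]
lemma inr_biprodCounit (X : A) : biprod.inr ≫ R.biprodCounit X = R.adj_j₁.counit.app X :=
  biprod.inr_desc _ _

instance isIso_jStar_map_biprodCounit (X : A) : IsIso (R.jStar.map (R.biprodCounit X)) :=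
  have := R.jStar.isIso_map_biprod_inr_of_isZero _ (R.jShriek.obj (R.jStar.obj X))
    (R.isZero_jStar_obj_iStar_obj (R.iShriek.obj X))
  IsIso.of_isIso_fac_left (by rw [← Functor.map_comp, inr_biprodCounit])

instance isIso_iShriek_map_biprodCounit [PreservesFiniteLimits R.iUpper] (X : A) :
    IsIso (R.iShriek.map (R.biprodCounit X)) :=
  have := R.iShriek.isIso_map_biprod_inl_of_isZero (R.iStar.obj (R.iShriek.obj X)) _
    (R.isZero_iShriek_obj_jShriek_obj (R.jStar.obj X))
  IsIso.of_isIso_fac_left (by rw [← Functor.map_comp, inl_biprodCounit])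

instance isIso_biprodCounit [PreservesFiniteLimits R.iUpper] [PreservesFiniteColimits R.iShriek]
    (X : A) : IsIso (R.biprodCounit X) :=
  R.isIso_of_isIso_jStar_map_of_isIso_iShriek_map _

instance isIso_iUpper_map_adj_i₂_counit_app [PreservesFiniteLimits R.iUpper]
    [PreservesFiniteColimits R.iShriek] (X : A) :
    IsIso (R.iUpper.map (R.adj_i₂.counit.app X)) := by
  have := R.iUpper.isIso_map_biprod_inl_of_isZero (R.iStar.obj (R.iShriek.obj X)) _
    (R.isZero_iUpper_obj_jShriek_obj (R.jStar.obj X))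
  rw [← inl_biprodCounit]
  show IsIso (R.iUpper.map (biprod.inl ≫ R.biprodCounit X))
  rw [Functor.map_comp]
  infer_instance

instance isIso_adj_j₁_counit_app_jLower_obj [PreservesFiniteLimits R.iUpper]
    [PreservesFiniteColimits R.iShriek] (Z : C) :
    IsIso (R.adj_j₁.counit.app (R.jLower.obj Z)) := by
  have : IsIso (biprod.inr : _ ⟶ R.iStar.obj (R.iShriek.obj (R.jLower.obj Z)) ⊞
      R.jShriek.obj (R.jStar.obj (R.jLower.obj Z))) := by
    rw [← isoZeroBiprod_hom (R.iStar.map_isZero (R.isZero_iShriek_obj_jLower_obj Z))]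
    infer_instance
  rw [← inr_biprodCounit]
  show IsIso (biprod.inr ≫ R.biprodCounit (R.jLower.obj Z))
  infer_instance

noncomputable def iShriekToIUpper : R.iShriek ⟶ R.iUpper :=
  R.iShriek.whiskerLeft (inv R.adj_i₁.counit) ≫ Functor.whiskerRight R.adj_i₂.counit R.iUpper

instance isIso_iShriekToIUpper [PreservesFiniteLimits R.iUpper]
    [PreservesFiniteColimits R.iShriek] : IsIso R.iShriekToIUpper :=
  have (X : A) : IsIso (R.iShriekToIUpper.app X) := by
    dsimp [iShriekToIUpper]
    infer_instance
  NatIso.isIso_of_isIso_app _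

noncomputable def jShriekToJLower : R.jShriek ⟶ R.jLower :=
  Functor.whiskerRight (inv R.adj_j₂.counit) R.jShriek ≫ R.jLower.whiskerLeft R.adj_j₁.counit

instance isIso_jShriekToJLower [PreservesFiniteLimits R.iUpper]
    [PreservesFiniteColimits R.iShriek] : IsIso R.jShriekToJLower :=
  have (Z : C) : IsIso (R.jShriekToJLower.app Z) := by
    dsimp [jShriekToJLower]
    infer_instance
  NatIso.isIso_of_isIso_app _

lemma hom_ext_of_map_eq [PreservesFiniteLimits R.iUpper] [PreservesFiniteColimits R.iShriek]
    {X Y : A} {f g : X ⟶ Y} (hi : R.iShriek.map f = R.iShriek.map g)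
    (hj : R.jStar.map f = R.jStar.map g) : f = g := by
  rw [← cancel_epi (R.biprodCounit X)]
  ext
  · rw [biprodCounit, biprod.inl_desc_assoc, biprod.inl_desc_assoc,
      ← R.adj_i₂.counit_naturality, ← R.adj_i₂.counit_naturality, hi]
  · rw [biprodCounit, biprod.inr_desc_assoc, biprod.inr_desc_assoc,
      ← R.adj_j₁.counit_naturality, ← R.adj_j₁.counit_naturality, hj]

instance mono_adj_j₁_counit_app [PreservesFiniteLimits R.iUpper]
    [PreservesFiniteColimits R.iShriek] (X : A) : Mono (R.adj_j₁.counit.app X) := by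
  rw [← inr_biprodCounit]
  exact mono_comp biprod.inr (R.biprodCounit X)

instance faithful_iShriek_prod'_jStar [PreservesFiniteLimits R.iUpper]
    [PreservesFiniteColimits R.iShriek] : (R.iShriek.prod' R.jStar).Faithful where
  map_injective h := R.hom_ext_of_map_eq (congrArg Prod.fst h) (congrArg Prod.snd h)

instance full_iShriek_prod'_jStar [PreservesFiniteLimits R.iUpper]
    [PreservesFiniteColimits R.iShriek] : (R.iShriek.prod' R.jStar).Full where
  map_surjective {X Y} := by
    rintro ⟨p, q⟩
    let f : X ⟶ Y := inv (R.biprodCounit X) ≫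
      biprod.map (R.iStar.map p) (R.jShriek.map q) ≫ R.biprodCounit Y
    refine ⟨f, Prod.ext ?_ ?_⟩
    · change R.iShriek.map f = p
      apply R.iStar.map_injective
      rw [← cancel_mono (R.adj_i₂.counit.app Y), R.adj_i₂.counit_naturality f,
        ← R.inl_biprodCounit X]
      simp only [f, Category.assoc, IsIso.hom_inv_id_assoc, biprod.inl_map_assoc]
      rw [inl_biprodCounit]
    · change R.jStar.map f = q
      apply R.jShriek.map_injective
      rw [← cancel_mono (R.adj_j₁.counit.app Y), R.adj_j₁.counit_naturality f,
        ← R.inr_biprodCounit X]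
      simp only [f, Category.assoc, IsIso.hom_inv_id_assoc, biprod.inr_map_assoc]
      rw [inr_biprodCounit]

instance essSurj_iShriek_prod'_jStar [PreservesFiniteLimits R.iUpper] :
    (R.iShriek.prod' R.jStar).EssSurj where
  mem_essImage := by
    rintro ⟨Y, Z⟩
    have := R.iShriek.isIso_map_biprod_inl_of_isZero (R.iStar.obj Y) _
      (R.isZero_iShriek_obj_jShriek_obj Z)
    have := R.jStar.isIso_map_biprod_inr_of_isZero _ (R.jShriek.obj Z)
      (R.isZero_jStar_obj_iStar_obj Y)
    exact ⟨R.iStar.obj Y ⊞ R.jShriek.obj Z, ⟨Iso.prod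
      ((asIso (R.iShriek.map biprod.inl)).symm ≪≫ (asIso (R.adj_i₂.unit.app Y)).symm)
      ((asIso (R.jStar.map biprod.inr)).symm ≪≫ (asIso (R.adj_j₁.unit.app Z)).symm)⟩⟩

end Recollement

theorem stmt11_general {B A C : Type*} [Category B] [Category A] [Category C]
    [Abelian B] [Abelian A] [Abelian C] (R : Recollement B A C)
    (h₁ : PreservesFiniteLimits R.iUpper)
    (h₄ : PreservesFiniteColimits R.iShriek) :
    Nonempty (R.iUpper ≅ R.iShriek) ∧ Nonempty (R.jShriek ≅ R.jLower) ∧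
    Nonempty (A ≌ B × C) :=
  have : (R.iShriek.prod' R.jStar).IsEquivalence := {}
  ⟨⟨(asIso R.iShriekToIUpper).symm⟩, ⟨asIso R.jShriekToJLower⟩,
    ⟨(R.iShriek.prod' R.jStar).asEquivalence⟩⟩

/-- in a recollement of abelian categories in which both `i^*` and `i^!`
are exact, `i^* ≅ i^!`, `j_! ≅ j_*`, and `A` is equivalent to `B × C`. -/
theorem stmt11 {B A C : Type*} [Category B] [Category A] [Category C]
    [Abelian B] [Abelian A] [Abelian C] (R : Recollement B A C)
    (h₁ : PreservesFiniteLimits R.iUpper) (h₂ : PreservesFiniteColimits R.iUpper)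
    (h₃ : PreservesFiniteLimits R.iShriek) (h₄ : PreservesFiniteColimits R.iShriek) :
    Nonempty (R.iUpper ≅ R.iShriek) ∧ Nonempty (R.jShriek ≅ R.jLower) ∧
    Nonempty (A ≌ B × C) :=
  stmt11_general R h₁ h₄
end

section
/- Given a left recollement (B, A, C, i^*, i_*, j_!, j^*) of abelian categories in which A has all products and coproducts, is well-powered, and the canonical morphism from any coproduct to the corresponding product is a monomorphism (e.g. A a Grothendieck category), the essential image of i_* is a torsion class; that is, (Im i_*, (Im i_*)^{⊥₀}) is a torsion pair in A. -/
open CategoryTheory Limits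

/-- A left recollement `(B, A, C, i^*, i_*, j_!, j^*)` of abelian categories:
`i_*` and `j^*` are exact, `i_*` and `j_!` are fully faithful, `(i^*, i_*)` and
`(j_!, j^*)` are adjoint pairs, and the essential image of `i_*` is the kernel of `j^*`. -/
structure LeftRecollement (B A C : Type*) [Category B] [Category A] [Category C]
    [Abelian B] [Abelian A] [Abelian C] where
  iUpper : A ⥤ B      -- i^*
  iStar : B ⥤ A       -- i_*
  jShriek : C ⥤ A     -- j_!
  jStar : A ⥤ C       -- j^*
  iStar_preservesFiniteLimits : PreservesFiniteLimits iStar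
  iStar_preservesFiniteColimits : PreservesFiniteColimits iStar
  jStar_preservesFiniteLimits : PreservesFiniteLimits jStar
  jStar_preservesFiniteColimits : PreservesFiniteColimits jStar
  iStar_full : iStar.Full
  iStar_faithful : iStar.Faithful
  jShriek_full : jShriek.Full
  jShriek_faithful : jShriek.Faithful
  adj_i : iUpper ⊣ iStar
  adj_j : jShriek ⊣ jStar
  im_eq_ker : ∀ X : A, (∃ Y : B, Nonempty (iStar.obj Y ≅ X)) ↔ IsZero (jStar.obj X)

open Classical in
/-- The canonical morphism from the coproduct to the product of a family. -/
noncomputable def coprodToProd {A : Type*} [Category A] [Abelian A]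
    [HasProducts A] [HasCoproducts A] {ι : Type*} (f : ι → A) : ∐ f ⟶ ∏ᶜ f :=
  Sigma.desc fun i => Pi.lift fun j => if h : i = j then eqToHom (congrArg f h) else 0

/-!
By the recollement axioms, `Im i_*` is the kernel of the exact functor `j^*`, so it is closed
under quotients and extensions. Being a right adjoint, `j^*` also preserves products; as
`∐ Xᵢ ↪ ∏ Xᵢ`, a coproduct of objects killed by `j^*` is killed as well. Dickson's criterion then
applies: the supremum `t(X)` of all subobjects of `X` in the class is a quotient of their
coproduct, hence in the class, and any map from the class to `X / t(X)` vanishes, because the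
preimage in `X` of its image is an extension of that image by `t(X)`, so lies in the class and
therefore inside `t(X)`.
-/

namespace CategoryTheory

namespace ObjectProperty

variable {A : Type u} [Category.{v} A] [Abelian A] (P : ObjectProperty A)

lemma hom_cokernel_eq_zero_of_forall_le [P.IsClosedUnderQuotients] [P.IsClosedUnderExtensions]
    {X : A} (T : Subobject X) (hT : P T) (hmax : ∀ S : Subobject X, P S → S ≤ T) {W : A} (hW : P W)
    (g : W ⟶ cokernel T.arrow) : g = 0 := by
  set m := image.ι g
  set π := cokernel.π T.arrow
  have sq := IsPullback.of_hasPullback m π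
  -- horizontal maps of a pullback square have isomorphic kernels; `kernel π` is a quotient of `T`
  have hK : P (kernel (pullback.fst m π)) := by
    have := isIso_kernel_map_of_isPullback sq
    exact P.prop_of_iso (asIso (kernel.map _ _ _ _ sq.w)).symm
      (P.prop_of_epi (Abelian.factorThruImage T.arrow) hT)
  have hQ : P (pullback m π) :=
    P.prop_X₂_of_shortExact (S := ShortComplex.mk _ _ (kernel.condition (pullback.fst m π)))
      { exact := ShortComplex.exact_of_f_is_kernel _ (kernelIsKernel _) } hK
      (P.prop_of_epi (factorThruImage g) hW)
  have hle := hmax (Subobject.mk (pullback.snd m π))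
    (P.prop_of_iso (Subobject.underlyingIso _).symm hQ)
  have hfst : pullback.fst m π ≫ m = 0 := by
    rw [sq.w, ← Subobject.ofMkLE_arrow hle, Category.assoc, cokernel.condition, comp_zero]
  have hm : m = 0 := by rw [← cancel_epi (pullback.fst m π), hfst, comp_zero]
  calc g = factorThruImage g ≫ m := (image.fac g).symm
    _ = 0 := by rw [hm, comp_zero]

section TorsionSubobject

variable [WellPowered.{v} A] [HasCoproducts.{v} A]

noncomputable def torsionSubobject (X : A) : Subobject X :=
  Subobject.sSup.{v} {S | P S}

lemma le_torsionSubobject {X : A} {S : Subobject X} (hS : P S) : S ≤ P.torsionSubobject X :=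
  Subobject.le_sSup _ _ hS

lemma prop_sSup [P.IsClosedUnderQuotients]
    (hP : ∀ {ι : Type v} (f : ι → A), (∀ i, P (f i)) → P (∐ f))
    {X : A} (s : Set (Subobject X)) (hs : ∀ S ∈ s, P S) : P (Subobject.sSup.{v} s : A) := by
  have hcoprod :=
    hP (fun j : equivShrink.{v} _ '' s => ((equivShrink.{v} (Subobject X)).symm j : A))
      fun j => hs _ ((Subobject.symm_apply_mem_iff_mem_image _ _ _).2 j.2)
  exact P.prop_of_iso (Subobject.underlyingIso _).symm
    (P.prop_of_epi (factorThruImage (Subobject.smallCoproductDesc.{v} s)) hcoprod)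

lemma prop_torsionSubobject [P.IsClosedUnderQuotients]
    (hP : ∀ {ι : Type v} (f : ι → A), (∀ i, P (f i)) → P (∐ f)) (X : A) :
    P (P.torsionSubobject X) :=
  P.prop_sSup hP _ fun _ hS => hS

lemma hom_cokernel_torsionSubobject_eq_zero [P.IsClosedUnderQuotients]
    [P.IsClosedUnderExtensions] (hP : ∀ {ι : Type v} (f : ι → A), (∀ i, P (f i)) → P (∐ f))
    (X : A) {W : A} (hW : P W) (g : W ⟶ cokernel (P.torsionSubobject X).arrow) : g = 0 :=
  P.hom_cokernel_eq_zero_of_forall_le _ (P.prop_torsionSubobject hP X)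
    (fun _ hS => P.le_torsionSubobject hS) hW g

end TorsionSubobject

end ObjectProperty

lemma Functor.kernel_sigma {A C : Type*} [Category A] [Category C] [Abelian A] [Abelian C]
    (F : A ⥤ C) [F.PreservesMonomorphisms] [HasProducts.{w} A] [HasCoproducts.{w} A]
    {ι : Type w} (f : ι → A) [PreservesLimit (Discrete.functor f) F] [Mono (coprodToProd f)]
    (hf : ∀ i, F.kernel (f i)) : F.kernel (∐ f) := by
  have hprod : F.kernel (∏ᶜ f) :=
    (isLimitOfPreserves F (limit.isLimit _)).isZero_pt (Functor.isZero _ fun j => hf j.as)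
  exact F.kernel.prop_of_mono (coprodToProd f) hprod

end CategoryTheory

/-- given a left recollement with `A` having products and coproducts,
well-powered, and with the canonical map from any coproduct to the product a
monomorphism (e.g. `A` Grothendieck), `(Im i_*, (Im i_*)^{⊥₀})` is a torsion pair. -/
theorem stmt12 {B A C : Type u} [Category.{v} B] [Category.{v} A] [Category.{v} C]
    [Abelian B] [Abelian A] [Abelian C] (R : LeftRecollement B A C)
    [HasProducts.{v} A] [HasCoproducts.{v} A] [WellPowered.{v} A]
    (hmono : ∀ {ι : Type v} (f : ι → A), Mono (coprodToProd f)) :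
    (∀ (X Y : A), (∃ Z : B, Nonempty (R.iStar.obj Z ≅ X)) →
      (∀ (Z : B) (g : R.iStar.obj Z ⟶ Y), g = 0) → ∀ f : X ⟶ Y, f = 0) ∧
    (∀ X : A, ∃ (T₀ : A) (f : T₀ ⟶ X), Mono f ∧
      (∃ Z : B, Nonempty (R.iStar.obj Z ≅ T₀)) ∧
      (∀ (Z : B) (g : R.iStar.obj Z ⟶ cokernel f), g = 0)) := by
  have := R.jStar_preservesFiniteLimits
  have := R.jStar_preservesFiniteColimits
  have := R.adj_j.rightAdjoint_preservesLimits
  have hsigma {ι : Type v} (f : ι → A) (hf : ∀ i, R.jStar.kernel (f i)) :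
      R.jStar.kernel (∐ f) :=
    have := hmono f
    R.jStar.kernel_sigma f hf
  refine ⟨?_, fun X => ?_⟩
  · rintro X Y ⟨Z, ⟨e⟩⟩ hY f
    rw [← e.inv_hom_id_assoc f, hY Z (e.hom ≫ f), comp_zero]
  · refine ⟨_, (R.jStar.kernel.torsionSubobject X).arrow, inferInstance,
      (R.im_eq_ker _).2 (R.jStar.kernel.prop_torsionSubobject hsigma X), fun Z g => ?_⟩
    exact R.jStar.kernel.hom_cokernel_torsionSubobject_eq_zero hsigma X
      ((R.im_eq_ker _).1 ⟨Z, ⟨Iso.refl _⟩⟩) g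
end

section
/- Given a left recollement (B, A, C, i^*, i_*, j_!, j^*) of abelian categories, for every object A of A there is an exact sequence 0 ⟶ i_* B ⟶ j_! j^* A ⟶ A ⟶ i_* i^* A ⟶ 0 for some object B of B, where the middle map is the counit of (j_!, j^*) and the last map is the unit of (i^*, i_*). -/
/-! Since `j_!` is fully faithful, the exact functor `j^*` inverts the counit `ε : j_! j^* X ⟶ X`,
so the kernel and cokernel of `ε` are killed by `j^*` and hence lie in the image `i_* B`. The
kernel gives the first term. Every morphism into `i_* B` factors through the unit
`η : X ⟶ i_* i^* X`; applied to the cokernel projection of `ε` this gives exactness at `X`. The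
cokernel of `η` is killed by `j^*` (its target is) and by the right exact `i^*` (which inverts
`η`, as `i_*` is fully faithful); an object killed by both is zero, so `η` is epi. -/

open CategoryTheory Limits

namespace CategoryTheory

section Adjunction

variable {C D : Type*} [Category C] [Category D] {F : C ⥤ D} {G : D ⥤ C}

lemma Adjunction.eq_zero_of_isZero_obj_left [HasZeroMorphisms C] (adj : F ⊣ G) {X : C} {Y : D}
    (hX : IsZero (F.obj X)) (f : X ⟶ G.obj Y) : f = 0 :=
  (adj.homEquiv X Y).symm.injective (hX.eq_of_src _ _)

lemma Adjunction.eq_zero_of_isZero_obj_right [HasZeroMorphisms D] (adj : F ⊣ G) {X : C} {Y : D}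
    (hY : IsZero (G.obj Y)) (f : F.obj X ⟶ Y) : f = 0 :=
  (adj.homEquiv X Y).injective (hY.eq_of_tgt _ _)

lemma Adjunction.comp_eq_zero_of_comp_unit_eq_zero [HasZeroMorphisms C] (adj : F ⊣ G)
    {W X : C} {g : W ⟶ X} (hg : g ≫ adj.unit.app X = 0) {Y : D} (f : X ⟶ G.obj Y) : g ≫ f = 0 := by
  rw [(adj.eq_unit_comp_map_iff _ f).mpr rfl, reassoc_of% hg, zero_comp]

end Adjunction

section Functor

variable {C D : Type*} [Category C] [Category D] [Abelian C] [Abelian D] (F : C ⥤ D)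

lemma Functor.isZero_obj_kernel_of_mono_map [PreservesFiniteLimits F] {X Y : C} (f : X ⟶ Y)
    [Mono (F.map f)] : IsZero (F.obj (Limits.kernel f)) :=
  (isZero_kernel_of_mono (F.map f)).of_iso (PreservesKernel.iso F f)

lemma Functor.isZero_obj_cokernel_of_epi_map [PreservesFiniteColimits F] {X Y : C} (f : X ⟶ Y)
    [Epi (F.map f)] : IsZero (F.obj (cokernel f)) :=
  (isZero_cokernel_of_epi (F.map f)).of_iso (PreservesCokernel.iso F f)

end Functor

end CategoryTheory

namespace LeftRecollement

variable {B A C : Type*} [Category B] [Category A] [Category C]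
    [Abelian B] [Abelian A] [Abelian C] (R : LeftRecollement B A C)

attribute [local instance] jStar_preservesFiniteLimits jStar_preservesFiniteColimits
  iStar_full iStar_faithful jShriek_full jShriek_faithful

lemma isZero_jStar_obj_iStar_obj (Y : B) : IsZero (R.jStar.obj (R.iStar.obj Y)) :=
  (R.im_eq_ker _).mp ⟨Y, ⟨Iso.refl _⟩⟩

lemma isZero_of_isZero_iUpper_obj_of_isZero_jStar_obj {X : A} (hi : IsZero (R.iUpper.obj X))
    (hj : IsZero (R.jStar.obj X)) : IsZero X := by
  obtain ⟨Y, ⟨e⟩⟩ := (R.im_eq_ker X).mpr hj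
  exact IsZero.of_mono_eq_zero e.inv (R.adj_i.eq_zero_of_isZero_obj_left hi _)

lemma counit_comp_unit (X : A) : R.adj_j.counit.app X ≫ R.adj_i.unit.app X = 0 :=
  R.adj_j.eq_zero_of_isZero_obj_right (R.isZero_jStar_obj_iStar_obj _) _

-- `j^*` inverts the counit of `j_! ⊣ j^*` because `j_!` is fully faithful.
lemma exists_iStar_obj_iso_kernel_counit (X : A) :
    ∃ Y : B, Nonempty (R.iStar.obj Y ≅ kernel (R.adj_j.counit.app X)) :=
  (R.im_eq_ker _).mpr (R.jStar.isZero_obj_kernel_of_mono_map _)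

lemma exists_iStar_obj_iso_cokernel_counit (X : A) :
    ∃ Y : B, Nonempty (R.iStar.obj Y ≅ cokernel (R.adj_j.counit.app X)) :=
  (R.im_eq_ker _).mpr (R.jStar.isZero_obj_cokernel_of_epi_map _)

lemma epi_unit (X : A) : Epi (R.adj_i.unit.app X) := by
  have := R.adj_i.leftAdjoint_preservesColimits
  have : Epi (R.jStar.map (R.adj_i.unit.app X)) :=
    (R.isZero_jStar_obj_iStar_obj _).epi _
  refine Preadditive.epi_of_isZero_cokernel _ ?_
  exact R.isZero_of_isZero_iUpper_obj_of_isZero_jStar_obj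
    (R.iUpper.isZero_obj_cokernel_of_epi_map _) (R.jStar.isZero_obj_cokernel_of_epi_map _)

lemma exact_counit_unit (X : A) :
    (ShortComplex.mk _ _ (R.counit_comp_unit X)).Exact := by
  rw [ShortComplex.exact_iff_kernel_ι_comp_cokernel_π_zero]
  obtain ⟨Z, ⟨e⟩⟩ := R.exists_iStar_obj_iso_cokernel_counit X
  rw [← cancel_mono e.inv, Category.assoc, zero_comp]
  exact R.adj_i.comp_eq_zero_of_comp_unit_eq_zero (kernel.condition _) _

end LeftRecollement

/-- for every object `X` there is an exact sequence
`0 ⟶ i_* Y ⟶ j_! j^* X ⟶ X ⟶ i_* i^* X ⟶ 0` for some `Y : B`, where the middle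
map is the counit of `(j_!, j^*)` and the last map the unit of `(i^*, i_*)`. -/
theorem stmt13 {B A C : Type*} [Category B] [Category A] [Category C]
    [Abelian B] [Abelian A] [Abelian C] (R : LeftRecollement B A C) (X : A) :
    ∃ (Y : B) (f : R.iStar.obj Y ⟶ R.jShriek.obj (R.jStar.obj X))
      (w₁ : f ≫ R.adj_j.counit.app X = 0)
      (w₂ : R.adj_j.counit.app X ≫ R.adj_i.unit.app X = 0),
      Mono f ∧ Epi (R.adj_i.unit.app X) ∧
      (ShortComplex.mk f (R.adj_j.counit.app X) w₁).Exact ∧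
      (ShortComplex.mk (R.adj_j.counit.app X) (R.adj_i.unit.app X) w₂).Exact := by
  obtain ⟨Y, ⟨e⟩⟩ := R.exists_iStar_obj_iso_kernel_counit X
  refine ⟨Y, e.hom ≫ kernel.ι _, by simp, R.counit_comp_unit X, inferInstance, R.epi_unit X,
    ShortComplex.exact_of_f_is_kernel _ ?_, R.exact_counit_unit X⟩
  exact (kernelIsKernel _).ofIsoLimit (Fork.ext e.symm (by simp))
end

section
/- Let K be a field, R = ∏_{i=1}^∞ K the countable product ring, and I = ⊕_{i=1}^∞ K the ideal of finitely supported elements. Then the class T = {M : Mod R | M·I = M} is closed under submodules; equivalently, the class G = {M : Mod R | M·I = 0} is closed under injective envelopes: if M·I = 0 then E(M)·I = 0 for an injective envelope E(M) of M. -/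
open Function

variable (K : Type) [Field K]

/-- The ideal `I = ⊕_{i∈ℕ} K` of finitely supported elements of `R = ∏_{i∈ℕ} K`. -/
def finSuppIdeal : Ideal (∀ _ : ℕ, K) where
  carrier := {r | (Function.support r).Finite}
  add_mem' := fun ha hb => Set.Finite.subset (ha.union hb) (Function.support_add _ _)
  zero_mem' := by simp [Function.support_zero]
  smul_mem' := fun c x hx => Set.Finite.subset hx (fun i hi => by
    simp only [Function.mem_support] at hi ⊢
    intro h
    exact hi (by simp [h]))

/-!
The argument rests on one property of `I`: every `r ∈ I` is fixed by some `e ∈ I` (the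
indicator of its support).
An element `∑ rᵢ mᵢ` of `I • M` is then fixed by a common such `e`, so it lies in `I • N` for
any submodule `N` containing it. If `I` kills `M` and `b • x ≠ 0` for some `b ∈ I`, `x ∈ E(M)`,
essentiality gives `0 ≠ r • b • x = f m`; but with `e • b = b` this element equals
`e • f m = f (e • m) = 0`.
-/

theorem finSuppIdeal_exists_mul_eq_self :
    ∀ r ∈ finSuppIdeal K, ∃ e ∈ finSuppIdeal K, e * r = r := by
  classical
  intro r hr
  refine ⟨(support r).indicator 1, hr.subset Set.support_indicator_subset, funext fun i => ?_⟩
  by_cases h : r i = 0 <;> simp [h]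

namespace Submodule

variable {R M : Type*} [CommRing R] [AddCommGroup M] [Module R M] {I : Ideal R}

theorem exists_smul_eq_self_of_mem_smul_top (hI : ∀ r ∈ I, ∃ e ∈ I, e * r = r) {m : M}
    (hm : m ∈ I • (⊤ : Submodule R M)) : ∃ e ∈ I, e • m = m := by
  refine smul_induction_on hm (fun r hr n _ => ?_) fun x y hx hy => ?_
  · obtain ⟨e, he, her⟩ := hI r hr
    exact ⟨e, he, by rw [← mul_smul, her]⟩
  · obtain ⟨e₁, he₁, hx⟩ := hx
    obtain ⟨e₂, he₂, hy⟩ := hy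
    -- `1 - e = (1 - e₁) * (1 - e₂)` kills both `x - e₁ • x` and `y - e₂ • y`
    refine ⟨e₁ + e₂ - e₁ * e₂, sub_mem (add_mem he₁ he₂) (I.mul_mem_right _ he₁), ?_⟩
    have hx' : (e₁ * e₂) • x = e₂ • x := by rw [mul_comm, mul_smul, hx]
    have hy' : (e₁ * e₂) • y = e₁ • y := by rw [mul_smul, hy]
    rw [smul_add, sub_smul, add_smul, sub_smul, add_smul, hx', hy', hx, hy]
    abel

theorem smul_eq_self_of_smul_top_eq_top (hI : ∀ r ∈ I, ∃ e ∈ I, e * r = r)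
    (htop : I • (⊤ : Submodule R M) = ⊤) (N : Submodule R M) : I • N = N := by
  refine le_antisymm smul_le_right fun m hm => ?_
  obtain ⟨e, he, hem⟩ := exists_smul_eq_self_of_mem_smul_top hI (htop.ge mem_top)
  have hmem := smul_mem_smul he hm
  rwa [hem] at hmem

end Submodule

theorem Module.le_annihilator_of_essential {R M E : Type*} [CommRing R] [AddCommGroup M]
    [Module R M] [AddCommGroup E] [Module R E] {I : Ideal R}
    (hI : ∀ r ∈ I, ∃ e ∈ I, e * r = r) (f : M →ₗ[R] E)
    (hess : ∀ P : Submodule R E, P ≠ ⊥ → P ⊓ LinearMap.range f ≠ ⊥)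
    (hM : I ≤ Module.annihilator R M) : I ≤ Module.annihilator R E := by
  intro b hb
  refine Module.mem_annihilator.2 fun x => by_contra fun hbx => ?_
  obtain ⟨e, he, heb⟩ := hI b hb
  obtain ⟨y, ⟨hy, m, hm⟩, hy0⟩ := (Submodule.ne_bot_iff _).1
    (hess (R ∙ b • x) (by simpa [Submodule.span_singleton_eq_bot] using hbx))
  obtain ⟨r, rfl⟩ := Submodule.mem_span_singleton.1 hy
  have hfixed : e • r • b • x = r • b • x := by
    rw [smul_comm e r, ← mul_smul e b, heb]
  have hkilled : e • f m = 0 := by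
    rw [← map_smul, Module.mem_annihilator.1 (hM he) m, map_zero]
  rw [hm, hfixed] at hkilled
  exact hy0 hkilled

/-- for `R = ∏_{i=1}^∞ K` and `I = ⊕_{i=1}^∞ K`, the class
`T = {M | M·I = M}` is closed under submodules; equivalently, the class
`G = {M | M·I = 0}` is closed under injective envelopes. -/
theorem stmt18 :
    (∀ (M : Type) [AddCommGroup M] [Module (∀ _ : ℕ, K) M],
      finSuppIdeal K • (⊤ : Submodule (∀ _ : ℕ, K) M) = ⊤ →
      ∀ N : Submodule (∀ _ : ℕ, K) M, finSuppIdeal K • N = N) ∧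
    (∀ (M E : Type) [AddCommGroup M] [Module (∀ _ : ℕ, K) M]
      [AddCommGroup E] [Module (∀ _ : ℕ, K) E],
      Module.Injective (∀ _ : ℕ, K) E →
      ∀ f : M →ₗ[(∀ _ : ℕ, K)] E, Function.Injective f →
      (∀ P : Submodule (∀ _ : ℕ, K) E, P ≠ ⊥ → P ⊓ LinearMap.range f ≠ ⊥) →
      finSuppIdeal K • (⊤ : Submodule (∀ _ : ℕ, K) M) = ⊥ →
      finSuppIdeal K • (⊤ : Submodule (∀ _ : ℕ, K) E) = ⊥) := by
  have hI := finSuppIdeal_exists_mul_eq_self K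
  refine ⟨fun M _ _ hM => Submodule.smul_eq_self_of_smul_top_eq_top hI hM,
    fun M E _ _ _ _ _ f _ hess hM => ?_⟩
  rw [← Submodule.le_annihilator_iff, Submodule.annihilator_top] at hM ⊢
  exact Module.le_annihilator_of_essential hI f hess hM
end
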